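/- arXiv:2602.21087 — 2 statements merged into one kernel-verified Lean document; each statement's English description precedes it below -/
import Mathlib

section
/- Let G be a simple graph on a vertex set V, let φ : V → W be a surjective map, and let G' be the simple graph on W in which two distinct vertices w, w' are adjacent if and only if there exist u, v ∈ V with φ(u) = w, φ(v) = w', and u adjacent to v in G. Assume that any two vertices of V with the same image under φ are connected by a walk in G (i.e., φ(u) = φ(v) implies u and v are reachable from each other in G). Then for all u, v ∈ V, u and v are reachable from each other in G if and only if φ(u) and φ(v) are reachable from each other in G'. In other words, contracting a graph along vertex classes that each lie within a single connected component does not affect its connectivity. -/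
/-- Contracting a simple graph along vertex classes that each lie within a single
connected component does not affect connectivity: if `φ : V → W` is surjective,
`G'` is the contraction of `G` along `φ`, and any two vertices with the same image
under `φ` are reachable from each other in `G`, then `u` and `v` are reachable in
`G` iff `φ u` and `φ v` are reachable in `G'`. -/
theorem contraction_preserves_reachability {V W : Type*}
    (G : SimpleGraph V) (G' : SimpleGraph W) (φ : V → W) (hφ : Function.Surjective φ)
    (hG' : ∀ w w' : W, G'.Adj w w' ↔
      (w ≠ w' ∧ ∃ u v : V, φ u = w ∧ φ v = w' ∧ G.Adj u v))
    (hfib : ∀ u v : V, φ u = φ v → G.Reachable u v) :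
    ∀ u v : V, G.Reachable u v ↔ G'.Reachable (φ u) (φ v) := by
  intro u v
  constructor
  · intro h
    obtain ⟨p⟩ := h
    induction p with
    | nil => exact SimpleGraph.Reachable.refl _
    | cons h p ih =>
      rename_i a b c
      refine SimpleGraph.Reachable.trans ?_ ih
      by_cases heq : φ a = φ b
      · exact heq ▸ SimpleGraph.Reachable.refl _
      · exact SimpleGraph.Adj.reachable ((hG' _ _).mpr ⟨heq, a, b, rfl, rfl, h⟩)
  · intro h
    have key : ∀ w w' : W, G'.Reachable w w' →
        ∀ a b : V, φ a = w → φ b = w' → G.Reachable a b := by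
      intro w w' h
      obtain ⟨p⟩ := h
      induction p with
      | nil => intro a b ha hb; exact hfib a b (ha.trans hb.symm)
      | cons h p ih =>
        rename_i x y z
        intro a b ha hb
        obtain ⟨hne, c, d, hc, hd, hadj⟩ := (hG' x y).mp h
        exact ((hfib a c (ha.trans hc.symm)).trans hadj.reachable).trans (ih d b hd hb)
    exact key _ _ h u v rfl rfl
end

section
/- Let G be a simple graph on a vertex set V, let φ : V → W be a surjective map, and let G' be the simple graph on W in which two distinct vertices w, w' are adjacent if and only if there exist u, v ∈ V with φ(u) = w, φ(v) = w', and u adjacent to v in G. Assume that any two vertices of V with the same image under φ are reachable from each other in G. Then φ induces a bijection between the set of connected components of G and the set of connected components of G'. -/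
/-- If `φ : V → W` is surjective, `G'` is the contraction of `G` along `φ`, and any
two vertices with the same image under `φ` are reachable from each other in `G`,
then `φ` induces a bijection between the connected components of `G` and those of
`G'`. -/
theorem contraction_components_bijection {V W : Type*}
    (G : SimpleGraph V) (G' : SimpleGraph W) (φ : V → W) (hφ : Function.Surjective φ)
    (hG' : ∀ w w' : W, G'.Adj w w' ↔
      (w ≠ w' ∧ ∃ u v : V, φ u = w ∧ φ v = w' ∧ G.Adj u v))
    (hfib : ∀ u v : V, φ u = φ v → G.Reachable u v) :
    ∃ Φ : G.ConnectedComponent ≃ G'.ConnectedComponent,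
      ∀ v : V, Φ (G.connectedComponentMk v) = G'.connectedComponentMk (φ v) := by
  classical
  have hpush : ∀ u v : V, G.Reachable u v → G'.Reachable (φ u) (φ v) := by
    intro u v h
    obtain ⟨p⟩ := h
    induction p with
    | nil => exact SimpleGraph.Reachable.refl _
    | @cons a b c hadj p ih =>
      refine SimpleGraph.Reachable.trans ?_ ih
      by_cases he : φ a = φ b
      · rw [he]
      · exact ((hG' _ _).mpr ⟨he, a, b, rfl, rfl, hadj⟩).reachable
  set F : G.ConnectedComponent → G'.ConnectedComponent :=
    SimpleGraph.ConnectedComponent.lift (fun v => G'.connectedComponentMk (φ v))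
      (fun u v p _ => SimpleGraph.ConnectedComponent.sound (hpush u v ⟨p⟩)) with hF
  have hpull : ∀ w w' : W, G'.Reachable w w' →
      G.Reachable (hφ w).choose (hφ w').choose := by
    intro w w' h
    obtain ⟨p⟩ := h
    induction p with
    | nil => exact SimpleGraph.Reachable.refl _
    | @cons a b c hadj p ih =>
      refine SimpleGraph.Reachable.trans ?_ ih
      obtain ⟨-, u, v, hu, hv, huv⟩ := (hG' _ _).mp hadj
      exact (hfib _ _ (by rw [(hφ a).choose_spec, hu])).trans
        (huv.reachable.trans (hfib _ _ (by rw [(hφ b).choose_spec, hv])))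
  set Ginv : G'.ConnectedComponent → G.ConnectedComponent :=
    SimpleGraph.ConnectedComponent.lift (fun w => G.connectedComponentMk (hφ w).choose)
      (fun w w' p _ => SimpleGraph.ConnectedComponent.sound (hpull w w' ⟨p⟩)) with hGi
  refine ⟨⟨F, Ginv, ?_, ?_⟩, fun v => rfl⟩
  · intro c
    induction c using SimpleGraph.ConnectedComponent.ind with
    | _ v =>
      show G.connectedComponentMk (hφ (φ v)).choose = G.connectedComponentMk v
      exact SimpleGraph.ConnectedComponent.sound (hfib _ _ ((hφ (φ v)).choose_spec))
  · intro c
    induction c using SimpleGraph.ConnectedComponent.ind with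
    | _ w =>
      show G'.connectedComponentMk (φ (hφ w).choose) = G'.connectedComponentMk w
      rw [(hφ w).choose_spec]
end
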